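/- Let k be a field, Q a finite quiver, and I an admissible ideal of kQ generated by uniform relations none of which involves a fixed arrow α of Q. Then the algebra Λ = kQ/I has a basis N consisting of residue classes of paths such that whenever the classes of paths p₁ and p₂ lie in N and the composite p₁αp₂ is defined, the class of p₁αp₂ also lies in N. -/

import Mathlib

open CategoryTheory

noncomputable section QuiverPreamble

/-- A finite quiver. -/
structure QuiverData where
  V : Type
  A : Type
  src : A → V
  tgt : A → V
  [fV : Fintype V]
  [fA : Fintype A]
  [dV : DecidableEq V]

attribute [instance] QuiverData.fV QuiverData.fA QuiverData.dV

variable (k : Type) [Field k] (Q : QuiverData)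

/-- The defining relations of the path algebra `kQ` as a quotient of the free
algebra on the vertices and arrows of `Q`. -/
inductive QuiverRel : FreeAlgebra k (Q.V ⊕ Q.A) → FreeAlgebra k (Q.V ⊕ Q.A) → Prop
  | vert (v w : Q.V) :
      QuiverRel (FreeAlgebra.ι k (.inl v) * FreeAlgebra.ι k (.inl w))
        (if v = w then FreeAlgebra.ι k (.inl v) else 0)
  | sum : QuiverRel (∑ v : Q.V, FreeAlgebra.ι k (Sum.inl v)) 1
  | tgt (a : Q.A) :
      QuiverRel (FreeAlgebra.ι k (.inl (Q.tgt a)) * FreeAlgebra.ι k (.inr a))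
        (FreeAlgebra.ι k (.inr a))
  | src (a : Q.A) :
      QuiverRel (FreeAlgebra.ι k (.inr a) * FreeAlgebra.ι k (.inl (Q.src a)))
        (FreeAlgebra.ι k (.inr a))

/-- The path algebra `kQ`. -/
def PathAlg := RingQuot (QuiverRel k Q)

instance : Ring (PathAlg k Q) := inferInstanceAs (Ring (RingQuot _))
instance : Algebra k (PathAlg k Q) := inferInstanceAs (Algebra k (RingQuot _))

/-- The class of a vertex (a primitive idempotent of `kQ`). -/
def vtx (v : Q.V) : PathAlg k Q :=
  RingQuot.mkAlgHom k (QuiverRel k Q) (FreeAlgebra.ι k (.inl v))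

/-- The class of an arrow in `kQ`. -/
def arr (a : Q.A) : PathAlg k Q :=
  RingQuot.mkAlgHom k (QuiverRel k Q) (FreeAlgebra.ι k (.inr a))

/-- The class in `kQ` of a vertex or an arrow. -/
def gen : Q.V ⊕ Q.A → PathAlg k Q
  | .inl v => vtx k Q v
  | .inr a => arr k Q a

/-- `IsPathFT x u v`: `x` is (the class in `kQ` of) a path from `u` to `v`. -/
inductive IsPathFT : PathAlg k Q → Q.V → Q.V → Prop
  | vert (v) : IsPathFT (vtx k Q v) v v
  | cons {p u v} (a : Q.A) (hp : IsPathFT p u v) (hv : Q.src a = v) :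
      IsPathFT (arr k Q a * p) u (Q.tgt a)

/-- `IsPathFTAvoid x p u v`: `p` is a path from `u` to `v` not involving the
vertex or arrow `x`. -/
inductive IsPathFTAvoid (x : Q.V ⊕ Q.A) : PathAlg k Q → Q.V → Q.V → Prop
  | vert (v) (hv : Sum.inl v ≠ x) : IsPathFTAvoid x (vtx k Q v) v v
  | cons {p u v} (a : Q.A) (hp : IsPathFTAvoid x p u v) (hv : Q.src a = v)
      (ha : Sum.inr a ≠ x) (ht : Sum.inl (Q.tgt a) ≠ x) :
      IsPathFTAvoid x (arr k Q a * p) u (Q.tgt a)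

/-- `x` is the class of a path. -/
def IsPath (x : PathAlg k Q) : Prop := ∃ u v, IsPathFT k Q x u v

/-- A uniform element: a linear combination of parallel paths. -/
def IsUniform (r : PathAlg k Q) : Prop :=
  ∃ u v, r ∈ Submodule.span k {p | IsPathFT k Q p u v}

/-- `r` does not involve the vertex or arrow `x`: `r` is a linear combination of
paths avoiding `x`. -/
def NotInvolving (x : Q.V ⊕ Q.A) (r : PathAlg k Q) : Prop :=
  r ∈ Submodule.span k {p | ∃ u v, IsPathFTAvoid k Q x p u v}

/-- The arrow ideal of `kQ`, as a `k`-subspace. -/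
def arrowSpan : Submodule k (PathAlg k Q) :=
  Submodule.span k {y | ∃ (a : Q.A) (b c : PathAlg k Q), y = b * arr k Q a * c}

/-- An admissible ideal of the path algebra. -/
def IsAdmissible (I : TwoSidedIdeal (PathAlg k Q)) : Prop :=
  (I : Set (PathAlg k Q)) ⊆ ↑(arrowSpan k Q * arrowSpan k Q) ∧
    ∃ n : ℕ, 0 < n ∧ ((arrowSpan k Q ^ n : Submodule k (PathAlg k Q)) : Set _) ⊆ (I : Set (PathAlg k Q))

/-- The quotient algebra `kQ/I`. -/
def QuotAlg (I : TwoSidedIdeal (PathAlg k Q)) :=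
  RingQuot (fun x y : PathAlg k Q => y = 0 ∧ x ∈ I)

instance (I : TwoSidedIdeal (PathAlg k Q)) : Ring (QuotAlg k Q I) :=
  inferInstanceAs (Ring (RingQuot _))
instance (I : TwoSidedIdeal (PathAlg k Q)) : Algebra k (QuotAlg k Q I) :=
  inferInstanceAs (Algebra k (RingQuot _))

/-- The quotient map `kQ → kQ/I`. -/
def quotMap (I : TwoSidedIdeal (PathAlg k Q)) : PathAlg k Q →ₐ[k] QuotAlg k Q I :=
  RingQuot.mkAlgHom k _

end QuiverPreamble

namespace St6
variable {k : Type} [Field k] {Q : QuiverData}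

section Rels
variable (k Q)

lemma vtx_mul_vtx (v w : Q.V) :
    vtx k Q v * vtx k Q w = if v = w then vtx k Q v else 0 := by
  have h := RingQuot.mkAlgHom_rel k (QuiverRel.vert (k := k) v w)
  rw [map_mul] at h
  rw [apply_ite (RingQuot.mkAlgHom k (QuiverRel k Q)), map_zero] at h
  exact h

lemma sum_vtx : (∑ v : Q.V, vtx k Q v) = 1 := by
  have h := RingQuot.mkAlgHom_rel k (QuiverRel.sum (k := k) (Q := Q))
  rw [map_sum, map_one] at h
  exact h

lemma vtxT_mul_arr (a : Q.A) : vtx k Q (Q.tgt a) * arr k Q a = arr k Q a := by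
  have h := RingQuot.mkAlgHom_rel k (QuiverRel.tgt (k := k) a)
  rw [map_mul] at h
  exact h

lemma arr_mul_vtxS (a : Q.A) : arr k Q a * vtx k Q (Q.src a) = arr k Q a := by
  have h := RingQuot.mkAlgHom_rel k (QuiverRel.src (k := k) a)
  rw [map_mul] at h
  exact h

lemma vtx_mul_arr (v : Q.V) (a : Q.A) :
    vtx k Q v * arr k Q a = if v = Q.tgt a then arr k Q a else 0 := by
  split_ifs with h
  · rw [h, vtxT_mul_arr]
  · rw [← vtxT_mul_arr k Q a, ← mul_assoc, vtx_mul_vtx, if_neg h, zero_mul]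

lemma arr_mul_vtx (a : Q.A) (v : Q.V) :
    arr k Q a * vtx k Q v = if Q.src a = v then arr k Q a else 0 := by
  split_ifs with h
  · rw [← h, arr_mul_vtxS]
  · rw [← arr_mul_vtxS k Q a, mul_assoc, vtx_mul_vtx, if_neg h, mul_zero]

end Rels

/-- Paths in the quiver `Q`, from a source vertex to a target vertex. -/
inductive PP (Q : QuiverData) : Q.V → Q.V → Type
  | nil (u : Q.V) : PP Q u u
  | cons {u v : Q.V} (p : PP Q u v) (a : Q.A) (h : Q.src a = v) : PP Q u (Q.tgt a)

variable (k) in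
/-- The element of the path algebra attached to a path. -/
def pathElem : ∀ {u v : Q.V}, PP Q u v → PathAlg k Q
  | _, _, .nil u => vtx k Q u
  | _, _, .cons p a _ => arr k Q a * pathElem p

@[simp] lemma pathElem_nil (u : Q.V) : pathElem k (PP.nil (Q := Q) u) = vtx k Q u := by rw [pathElem]
@[simp] lemma pathElem_cons {u v : Q.V} (p : PP Q u v) (a : Q.A) (h : Q.src a = v) :
    pathElem k (PP.cons p a h) = arr k Q a * pathElem k p := by rw [pathElem]

lemma vtx_mul_pathElem {u v : Q.V} (w : Q.V) (p : PP Q u v) :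
    vtx k Q w * pathElem k p = if w = v then pathElem k p else 0 := by
  induction p with
  | nil =>
    rw [pathElem_nil, vtx_mul_vtx]
    split_ifs with h
    · rw [h]
    · rfl
  | cons p a h ih =>
    rw [pathElem_cons, ← mul_assoc, vtx_mul_arr]
    split_ifs with h2
    · rfl
    · rw [zero_mul]

lemma pathElem_mul_vtx {u v : Q.V} (p : PP Q u v) (w : Q.V) :
    pathElem k p * vtx k Q w = if u = w then pathElem k p else 0 := by
  induction p with
  | nil =>
    rw [pathElem_nil, vtx_mul_vtx]
  | cons p a h ih =>
    rw [pathElem_cons, mul_assoc, ih]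
    split <;> simp

/-- Composition of paths. -/
def PP.comp : ∀ {u v w : Q.V}, PP Q u v → PP Q v w → PP Q u w
  | _, _, _, p, .nil _ => p
  | _, _, _, p, .cons q a h => .cons (p.comp q) a h

@[simp] lemma PP.comp_nil {u v : Q.V} (p : PP Q u v) : p.comp (PP.nil v) = p := by rw [PP.comp]
@[simp] lemma PP.comp_cons {u v w : Q.V} (p : PP Q u v) (q : PP Q v w) (a : Q.A)
    (h : Q.src a = w) : p.comp (PP.cons q a h) = PP.cons (p.comp q) a h := by rw [PP.comp]

lemma PP.nil_comp : ∀ {u v : Q.V} (p : PP Q u v), (PP.nil u).comp p = p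
  | _, _, .nil u => by rw [PP.comp]
  | _, _, .cons p a h => by rw [comp_cons, nil_comp p]

lemma PP.comp_assoc {u v w z : Q.V} (p : PP Q u v) (q : PP Q v w) :
    ∀ (r : PP Q w z), (p.comp q).comp r = p.comp (q.comp r)
  | .nil _ => by rw [PP.comp_nil, PP.comp_nil]
  | .cons r a h => by rw [comp_cons, comp_cons, comp_cons, PP.comp_assoc p q r]

lemma pathElem_comp {u v w : Q.V} (p : PP Q u v) (q : PP Q v w) :
    pathElem k (p.comp q) = pathElem k q * pathElem k p := by
  induction q with
  | nil => rw [PP.comp_nil, pathElem_nil, vtx_mul_pathElem, if_pos rfl]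
  | cons q a h ih => rw [PP.comp_cons, pathElem_cons, pathElem_cons, mul_assoc, ih]

lemma pathElem_mul_pathElem_of_ne {v' w u v : Q.V} (q : PP Q v' w) (p : PP Q u v)
    (hne : v' ≠ v) : pathElem k q * pathElem k p = 0 := by
  induction q with
  | nil => rw [pathElem_nil, vtx_mul_pathElem, if_neg hne]
  | cons q a h ih => rw [pathElem_cons, mul_assoc, ih, mul_zero]

end St6
namespace St6
variable {k : Type} [Field k] {Q : QuiverData}

/-- The index type of all paths. -/
def Idx (Q : QuiverData) := Σ u v : Q.V, PP Q u v

variable (k Q) in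
/-- The free module on all paths. -/
abbrev MM := Idx Q →₀ k

noncomputable section

variable (k Q) in
/-- Action of a vertex on the path module. -/
def Ev (v : Q.V) : MM k Q →ₗ[k] MM k Q :=
  Finsupp.lsum k fun i => if i.2.1 = v then Finsupp.lsingle i else 0

variable (k Q) in
/-- Action of an arrow on the path module. -/
def Aa (a : Q.A) : MM k Q →ₗ[k] MM k Q :=
  Finsupp.lsum k fun i =>
    if h : Q.src a = i.2.1 then Finsupp.lsingle ⟨i.1, Q.tgt a, PP.cons i.2.2 a h⟩ else 0

lemma Ev_single (v : Q.V) (i : Idx Q) (c : k) :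
    Ev k Q v (Finsupp.single i c) =
      if i.2.1 = v then Finsupp.single i c else 0 := by
  rw [Ev, Finsupp.lsum_single]
  split_ifs <;> rfl

lemma Aa_single (a : Q.A) (i : Idx Q) (c : k) :
    Aa k Q a (Finsupp.single i c) =
      if h : Q.src a = i.2.1 then
        Finsupp.single (⟨i.1, Q.tgt a, PP.cons i.2.2 a h⟩ : Idx Q) c else 0 := by
  rw [Aa, Finsupp.lsum_single]
  split_ifs <;> rfl

variable (k Q) in
/-- Action of a generator. -/
def genAct : Q.V ⊕ Q.A → Module.End k (MM k Q)
  | .inl v => Ev k Q v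
  | .inr a => Aa k Q a

variable (k Q) in
def rho0 : FreeAlgebra k (Q.V ⊕ Q.A) →ₐ[k] Module.End k (MM k Q) :=
  FreeAlgebra.lift k (genAct k Q)

@[simp] lemma rho0_inl (v : Q.V) : rho0 k Q (FreeAlgebra.ι k (.inl v)) = Ev k Q v :=
  FreeAlgebra.lift_ι_apply _ _

@[simp] lemma rho0_inr (a : Q.A) : rho0 k Q (FreeAlgebra.ι k (.inr a)) = Aa k Q a :=
  FreeAlgebra.lift_ι_apply _ _

lemma rho0_rel : ∀ ⦃x y⦄, QuiverRel k Q x y → rho0 k Q x = rho0 k Q y := by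
  intro x y hrel
  induction hrel with
  | vert v w =>
    rw [map_mul, rho0_inl, rho0_inl, apply_ite (rho0 k Q), rho0_inl, map_zero]
    refine Finsupp.lhom_ext fun i c => ?_
    rw [Module.End.mul_apply, Ev_single]
    by_cases h2 : v = w
    · subst h2
      rw [if_pos rfl]
      split_ifs with h1
      · rw [Ev_single, if_pos h1]
      · rw [map_zero, Ev_single, if_neg h1]
    · rw [if_neg h2, LinearMap.zero_apply]
      split_ifs with h1
      · rw [Ev_single, if_neg (fun hh => h2 (hh.symm.trans h1))]
      · rw [map_zero]
  | sum =>
    rw [map_sum]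
    simp only [rho0_inl]
    rw [map_one]
    refine Finsupp.lhom_ext fun i c => ?_
    rw [LinearMap.sum_apply, Module.End.one_apply]
    rw [Finset.sum_congr rfl (fun v _ => Ev_single v i c)]
    rw [Finset.sum_ite_eq (Finset.univ : Finset Q.V) i.2.1 (fun _ => Finsupp.single i c)]
    rw [if_pos (Finset.mem_univ _)]
  | tgt a =>
    rw [map_mul, rho0_inl, rho0_inr]
    refine Finsupp.lhom_ext fun i c => ?_
    rw [Module.End.mul_apply, Aa_single]
    split_ifs with h
    · erw [Ev_single]; exact if_pos rfl
    · exact map_zero _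
  | src a =>
    rw [map_mul, rho0_inl, rho0_inr]
    refine Finsupp.lhom_ext fun i c => ?_
    rw [Module.End.mul_apply, Ev_single]
    by_cases h : i.2.1 = Q.src a
    · rw [if_pos h]
    · rw [if_neg h, map_zero, Aa_single, dif_neg (fun hh => h hh.symm)]; exact rfl

variable (k Q) in
def rho : PathAlg k Q →ₐ[k] Module.End k (MM k Q) :=
  RingQuot.liftAlgHom k ⟨rho0 k Q, rho0_rel⟩

lemma rho_mk (x : FreeAlgebra k (Q.V ⊕ Q.A)) :
    rho k Q (RingQuot.mkAlgHom k (QuiverRel k Q) x) = rho0 k Q x :=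
  RingQuot.liftAlgHom_mkAlgHom_apply _ _ _ _

@[simp] lemma rho_vtx (v : Q.V) : rho k Q (vtx k Q v) = Ev k Q v := by
  rw [vtx, rho_mk, rho0_inl]

@[simp] lemma rho_arr (a : Q.A) : rho k Q (arr k Q a) = Aa k Q a := by
  rw [arr, rho_mk, rho0_inr]

variable (k Q) in
def m0 : MM k Q := ∑ v : Q.V, Finsupp.single ⟨v, v, PP.nil v⟩ (1 : k)

variable (k Q) in
def ev : PathAlg k Q →ₗ[k] MM k Q where
  toFun x := rho k Q x (m0 k Q)
  map_add' x y := by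
    show rho k Q (x + y) (m0 k Q) = rho k Q x (m0 k Q) + rho k Q y (m0 k Q)
    rw [map_add, LinearMap.add_apply]
  map_smul' c x := by
    show rho k Q (c • x) (m0 k Q) = c • rho k Q x (m0 k Q)
    rw [map_smul, LinearMap.smul_apply]

lemma ev_vtx (w : Q.V) :
    ev k Q (vtx k Q w) = Finsupp.single (⟨w, w, PP.nil w⟩ : Idx Q) (1 : k) := by
  show rho k Q (vtx k Q w) (m0 k Q) = _
  rw [rho_vtx, m0, map_sum]
  rw [Finset.sum_eq_single w (fun b _ hb => by erw [Ev_single]; exact if_neg hb)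
    (fun h => absurd (Finset.mem_univ w) h)]
  erw [Ev_single]; exact if_pos rfl

lemma ev_arr_mul (a : Q.A) (z : PathAlg k Q) :
    ev k Q (arr k Q a * z) = Aa k Q a (ev k Q z) := by
  show rho k Q (arr k Q a * z) (m0 k Q) = Aa k Q a (rho k Q z (m0 k Q))
  rw [map_mul, Module.End.mul_apply, rho_arr]

lemma ev_pathElem {u v : Q.V} (p : PP Q u v) :
    ev k Q (pathElem k p) = Finsupp.single ⟨u, v, p⟩ (1 : k) := by
  induction p with
  | nil => rw [pathElem_nil, ev_vtx]; exact rfl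
  | cons p a h ih =>
    rw [pathElem_cons, ev_arr_mul, ih]; erw [Aa_single]; exact dif_pos h

variable (k Q) in
def peF : Idx Q → PathAlg k Q := fun i => pathElem k i.2.2

lemma ev_peF (i : Idx Q) : ev k Q (peF k Q i) = Finsupp.single i (1 : k) := by
  obtain ⟨u, v, p⟩ := i
  exact ev_pathElem p

lemma peF_indep : LinearIndependent k (peF k Q) := by
  have h2 : LinearIndependent k (fun i : Idx Q => Finsupp.single i (1 : k)) := by
    have := (Finsupp.basisSingleOne (R := k) (ι := Idx Q)).linearIndependent
    simpa [Finsupp.coe_basisSingleOne] using this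
  refine LinearIndependent.of_comp (ev k Q) ?_
  have heq : ⇑(ev k Q) ∘ peF k Q = fun i : Idx Q => Finsupp.single i (1 : k) :=
    funext ev_peF
  rw [heq]
  exact h2

lemma one_eq_sum_vtx : (1 : PathAlg k Q) = ∑ v : Q.V, vtx k Q v := (sum_vtx k Q).symm

lemma peF_span : Submodule.span k (Set.range (peF k Q)) = ⊤ := by
  rw [eq_top_iff]
  have hmem : ∀ z, RingQuot.mkAlgHom k (QuiverRel k Q) z ∈
      Submodule.span k (Set.range (peF k Q)) := by
    intro z
    induction z using FreeAlgebra.induction with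
    | grade0 r =>
      rw [AlgHom.commutes, Algebra.algebraMap_eq_smul_one]
      refine Submodule.smul_mem _ _ ?_
      show (1 : PathAlg k Q) ∈ Submodule.span k (Set.range (peF k Q))
      rw [one_eq_sum_vtx]
      refine Submodule.sum_mem _ fun v _ => Submodule.subset_span ?_
      exact ⟨⟨v, v, PP.nil v⟩, pathElem_nil v⟩
    | grade1 x =>
      match x with
      | .inl v => exact Submodule.subset_span ⟨⟨v, v, PP.nil v⟩, pathElem_nil v⟩
      | .inr a =>
        refine Submodule.subset_span ⟨⟨Q.src a, Q.tgt a, PP.cons (PP.nil (Q.src a)) a rfl⟩, ?_⟩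
        show pathElem k (PP.cons (PP.nil (Q.src a)) a rfl) = arr k Q a
        rw [pathElem_cons, pathElem_nil, arr_mul_vtxS]
    | mul x y hx hy =>
      rw [map_mul]
      have : Submodule.span k (Set.range (peF k Q)) * Submodule.span k (Set.range (peF k Q)) ≤
          Submodule.span k (Set.range (peF k Q)) := by
        rw [Submodule.span_mul_span]
        refine Submodule.span_le.mpr ?_
        rintro _ ⟨x₁, ⟨⟨u₁, v₁, p₁⟩, rfl⟩, y₁, ⟨⟨u₂, v₂, p₂⟩, rfl⟩, rfl⟩
        show peF k Q _ * peF k Q _ ∈ _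
        by_cases hcase : u₁ = v₂
        · subst hcase
          dsimp only [peF]
          show pathElem k p₁ * pathElem k p₂ ∈ _
          rw [← pathElem_comp]
          exact Submodule.subset_span ⟨⟨u₂, v₁, p₂.comp p₁⟩, rfl⟩
        · dsimp only [peF]
          show pathElem k p₁ * pathElem k p₂ ∈ _
          rw [pathElem_mul_pathElem_of_ne p₁ p₂ hcase]
          exact Submodule.zero_mem _
      exact this (Submodule.mul_mem_mul hx hy)
    | add x y hx hy => rw [map_add]; exact Submodule.add_mem _ hx hy
  intro x _
  obtain ⟨z, rfl⟩ := RingQuot.mkAlgHom_surjective k (QuiverRel k Q) x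
  exact hmem z

variable (k Q) in
def pathBasis : Module.Basis (Idx Q) k (PathAlg k Q) :=
  Module.Basis.mk peF_indep (by rw [peF_span])

@[simp] lemma pathBasis_apply (i : Idx Q) : pathBasis k Q i = peF k Q i := Module.Basis.mk_apply _ _ _

lemma peF_injective : Function.Injective (peF k Q) := peF_indep.injective

end
end St6
namespace St6
variable {k : Type} [Field k] {Q : QuiverData}

noncomputable section

variable (k) in
/-- A two-sided ideal as a `k`-submodule. -/
def Isub (I : TwoSidedIdeal (PathAlg k Q)) : Submodule k (PathAlg k Q) where
  carrier := I
  add_mem' := fun hx hy => I.add_mem hx hy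
  zero_mem' := I.zero_mem
  smul_mem' := fun c x hx => by
    rw [Algebra.smul_def]
    exact I.mul_mem_left _ _ hx

@[simp] lemma mem_Isub {I : TwoSidedIdeal (PathAlg k Q)} {x : PathAlg k Q} :
    x ∈ Isub k I ↔ x ∈ I := Iff.rfl

variable {I : TwoSidedIdeal (PathAlg k Q)}

lemma quotMap_eq_zero_of_mem {x : PathAlg k Q} (hx : x ∈ I) : quotMap k Q I x = 0 := by
  have h := RingQuot.mkAlgHom_rel (S := k)
    (s := fun a b : PathAlg k Q => b = 0 ∧ a ∈ I) (x := x) (y := 0) ⟨rfl, hx⟩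
  rw [map_zero] at h
  exact h

lemma mem_of_quotMap_eq_zero {x : PathAlg k Q} (hx : quotMap k Q I x = 0) : x ∈ I := by
  letI : Algebra k I.ringCon.Quotient :=
    RingHom.toAlgebra' ((RingCon.mk' I.ringCon).comp (algebraMap k (PathAlg k Q)))
      (fun c z => by
        obtain ⟨y, rfl⟩ : ∃ y, (RingCon.mk' I.ringCon) y = z :=
          Quot.exists_rep z
        rw [RingHom.comp_apply, ← map_mul, ← map_mul, Algebra.commutes])
  let f : PathAlg k Q →ₐ[k] I.ringCon.Quotient :=
    { toRingHom := RingCon.mk' I.ringCon, commutes' := fun r => rfl }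
  have hf : ∀ ⦃a b : PathAlg k Q⦄, (b = 0 ∧ a ∈ I) → f a = f b := by
    rintro a b ⟨rfl, ha⟩
    show (a : I.ringCon.Quotient) = ((0 : PathAlg k Q) : I.ringCon.Quotient)
    rw [RingCon.eq, I.rel_iff, sub_zero]
    exact ha
  let g := RingQuot.liftAlgHom k (s := fun a b : PathAlg k Q => b = 0 ∧ a ∈ I) ⟨f, hf⟩
  have h1 : g (quotMap k Q I x) = f x :=
    RingQuot.liftAlgHom_mkAlgHom_apply _ _ _ _
  rw [hx, show (0 : QuotAlg k Q I) = (0 : RingQuot (fun a b : PathAlg k Q => b = 0 ∧ a ∈ I)) from rfl, map_zero] at h1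
  have h2 : ((x : PathAlg k Q) : I.ringCon.Quotient) = ((0 : PathAlg k Q) : I.ringCon.Quotient) :=
    h1.symm
  rw [RingCon.eq, I.rel_iff, sub_zero] at h2
  exact h2

lemma quotMap_eq_zero_iff {x : PathAlg k Q} : quotMap k Q I x = 0 ↔ x ∈ I :=
  ⟨mem_of_quotMap_eq_zero, quotMap_eq_zero_of_mem⟩

end
end St6
namespace St6
variable {k : Type} [Field k] {Q : QuiverData}

noncomputable section
open scoped Classical

/-- `p` does not involve the arrow `α`. -/
def AFree (α : Q.A) : ∀ {u v : Q.V}, PP Q u v → Prop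
  | _, _, .nil _ => True
  | _, _, .cons p a _ => AFree α p ∧ a ≠ α

@[simp] lemma aFree_nil (α : Q.A) (u : Q.V) : AFree α (PP.nil (Q := Q) u) := by
  rw [AFree]; trivial

lemma aFree_cons_iff (α : Q.A) {u v : Q.V} (p : PP Q u v) (a : Q.A) (h : Q.src a = v) :
    AFree α (PP.cons p a h) ↔ AFree α p ∧ a ≠ α := by
  rw [AFree]

def PP.length : ∀ {u v : Q.V}, PP Q u v → ℕ
  | _, _, .nil _ => 0
  | _, _, .cons p _ _ => p.length + 1

lemma aFree_comp (α : Q.A) {u v w : Q.V} (p : PP Q u v) (q : PP Q v w)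
    (hp : AFree α p) (hq : AFree α q) : AFree α (p.comp q) := by
  induction q with
  | nil => rw [PP.comp_nil]; exact hp
  | cons q a h ih =>
    rw [aFree_cons_iff] at hq
    rw [PP.comp_cons, aFree_cons_iff]
    exact ⟨ih hq.1, hq.2⟩

/-- The `α`-free top (target-side) segment of a path. -/
def top (α : Q.A) : ∀ {u v : Q.V}, PP Q u v → Σ w : Q.V, PP Q w v
  | _, _, .nil u => ⟨u, .nil u⟩
  | _, _, .cons p a h =>
    if _ : a = α then ⟨Q.tgt a, .nil (Q.tgt a)⟩
    else ⟨(top α p).1, .cons (top α p).2 a h⟩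

variable (k) in
/-- The processed lower part of a path, relative to a projection `pr`. -/
def low (α : Q.A) (pr : PathAlg k Q →ₗ[k] PathAlg k Q) :
    ∀ {u v : Q.V}, PP Q u v → PathAlg k Q
  | _, _, .nil u => vtx k Q u
  | _, _, .cons p a _ =>
    if a = α then arr k Q α * (pr (pathElem k (top α p).2) * low α pr p)
    else low α pr p

variable (k) in
/-- `psi` applies `pr` to every maximal `α`-free segment of a path. -/
def psi (α : Q.A) (pr : PathAlg k Q →ₗ[k] PathAlg k Q) {u v : Q.V} (p : PP Q u v) :
    PathAlg k Q :=
  pr (pathElem k (top α p).2) * low k α pr p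

@[simp] lemma top_nil (α : Q.A) (u : Q.V) :
    top α (PP.nil (Q := Q) u) = ⟨u, PP.nil u⟩ := by rw [top]

lemma top_cons_eq (α : Q.A) {u v : Q.V} (p : PP Q u v) (a : Q.A) (h : Q.src a = v)
    (ha : a = α) : top α (PP.cons p a h) = ⟨Q.tgt a, PP.nil (Q.tgt a)⟩ := by
  rw [top, dif_pos ha]

lemma top_cons_ne (α : Q.A) {u v : Q.V} (p : PP Q u v) (a : Q.A) (h : Q.src a = v)
    (ha : ¬ a = α) :
    top α (PP.cons p a h) = ⟨(top α p).1, PP.cons (top α p).2 a h⟩ := by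
  rw [top, dif_neg ha]

@[simp] lemma low_nil (α : Q.A) (pr : PathAlg k Q →ₗ[k] PathAlg k Q) (u : Q.V) :
    low k α pr (PP.nil (Q := Q) u) = vtx k Q u := by rw [low]

lemma low_cons_eq (α : Q.A) (pr : PathAlg k Q →ₗ[k] PathAlg k Q) {u v : Q.V}
    (p : PP Q u v) (a : Q.A) (h : Q.src a = v) (ha : a = α) :
    low k α pr (PP.cons p a h) = arr k Q α * psi k α pr p := by
  rw [low, if_pos ha, psi]

lemma low_cons_ne (α : Q.A) (pr : PathAlg k Q →ₗ[k] PathAlg k Q) {u v : Q.V}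
    (p : PP Q u v) (a : Q.A) (h : Q.src a = v) (ha : ¬ a = α) :
    low k α pr (PP.cons p a h) = low k α pr p := by
  rw [low, if_neg ha]

/-- For an `α`-free path, the top segment is everything. -/
lemma top_of_aFree (α : Q.A) {u v : Q.V} (p : PP Q u v) (hp : AFree α p) :
    pathElem k (top α p).2 = pathElem k p ∧
      ∀ pr : PathAlg k Q →ₗ[k] PathAlg k Q, low k α pr p = vtx k Q u := by
  induction p with
  | nil => exact ⟨by rw [top_nil], fun pr => low_nil α pr _⟩
  | cons p a h ih =>
    rw [aFree_cons_iff] at hp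
    obtain ⟨hp1, hp2⟩ := hp
    refine ⟨?_, fun pr => by rw [low_cons_ne _ _ _ _ _ hp2, (ih hp1).2 pr]⟩
    rw [top_cons_ne _ _ _ _ hp2]
    show pathElem k ((top α p).2.cons a h) = _
    rw [pathElem_cons, (ih hp1).1, pathElem_cons]

/-- Composing with an `α`-free path on the target side. -/
lemma comp_aFree_top (α : Q.A) {u v : Q.V} (p : PP Q u v) (hp : AFree α p) :
    ∀ {z : Q.V} (b : PP Q z u),
      pathElem k (top α (b.comp p)).2 = pathElem k p * pathElem k (top α b).2 ∧
      ∀ pr : PathAlg k Q →ₗ[k] PathAlg k Q, low k α pr (b.comp p) = low k α pr b := by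
  induction p with
  | nil =>
    intro z b
    rw [PP.comp_nil, pathElem_nil]
    refine ⟨?_, fun pr => rfl⟩
    rw [vtx_mul_pathElem, if_pos rfl]
  | cons p a h ih =>
    intro z b
    rw [aFree_cons_iff] at hp
    obtain ⟨hp1, hp2⟩ := hp
    rw [PP.comp_cons]
    constructor
    · rw [top_cons_ne _ _ _ _ hp2]
      show pathElem k ((top α (b.comp p)).2.cons a h) = _
      rw [pathElem_cons, (ih hp1 b).1, pathElem_cons, mul_assoc]
    · intro pr
      simp only [low_cons_ne _ _ _ _ _ hp2]
      exact (ih hp1 b).2 pr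

/-- Decomposition of a path that involves `α`. -/
lemma notAFree_decomp (α : Q.A) {u v : Q.V} (p : PP Q u v) (hp : ¬ AFree α p) :
    ∃ r : PP Q u (Q.src α),
      pathElem k p = pathElem k (top α p).2 * (arr k Q α * pathElem k r) ∧
      (∀ pr : PathAlg k Q →ₗ[k] PathAlg k Q,
        low k α pr p = arr k Q α * psi k α pr r) ∧
      (∀ {z : Q.V} (b : PP Q z u),
        top α (b.comp p) = top α p ∧
        ∀ pr : PathAlg k Q →ₗ[k] PathAlg k Q,
          low k α pr (b.comp p) = arr k Q α * psi k α pr (b.comp r)) ∧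
      r.length < p.length := by
  induction p with
  | nil => exact absurd (aFree_nil α _) hp
  | cons p a h ih =>
    by_cases ha : a = α
    · subst ha
      subst h
      refine ⟨p, ?_, fun pr => low_cons_eq _ _ _ _ _ rfl, fun b => ?_, ?_⟩
      · rw [top_cons_eq _ _ _ _ rfl]
        show pathElem k (p.cons a rfl) =
          pathElem k (PP.nil (Q.tgt a)) * (arr k Q a * pathElem k p)
        rw [pathElem_nil, pathElem_cons, ← mul_assoc, vtxT_mul_arr]
      · rw [PP.comp_cons]
        refine ⟨?_, fun pr => low_cons_eq _ _ _ _ _ rfl⟩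
        rw [top_cons_eq _ _ _ _ rfl, top_cons_eq _ _ _ _ rfl]
      · rw [PP.length]
        exact Nat.lt_succ_self _
    · have hp' : ¬ AFree α p := fun hf => hp (by rw [aFree_cons_iff]; exact ⟨hf, ha⟩)
      obtain ⟨r, h1, h2, h3, h4⟩ := ih hp'
      refine ⟨r, ?_, ?_, fun b => ?_, ?_⟩
      · rw [pathElem_cons, h1, top_cons_ne _ _ _ _ ha]
        show arr k Q a * (pathElem k (top α p).2 * (arr k Q α * pathElem k r)) =
          pathElem k ((top α p).2.cons a h) * (arr k Q α * pathElem k r)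
        rw [pathElem_cons, mul_assoc]
      · intro pr
        rw [low_cons_ne _ _ _ _ _ ha, h2 pr]
      · rw [PP.comp_cons]
        constructor
        · rw [top_cons_ne _ _ _ _ ha, top_cons_ne _ _ _ _ ha, (h3 b).1]
        · intro pr
          rw [low_cons_ne _ _ _ _ _ ha, (h3 b).2 pr]
      · rw [PP.length]
        exact h4.trans (Nat.lt_succ_self _)

end
end St6
namespace St6
variable {k : Type} [Field k] {Q : QuiverData}

noncomputable section
open scoped Classical

variable (k Q) in
/-- The set of (classes of) `α`-free paths. -/
def AFSet (α : Q.A) : Set (PathAlg k Q) :=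
  {x | ∃ (u v : Q.V) (p : PP Q u v), AFree α p ∧ x = pathElem k p}

variable (k Q) in
/-- The span of the `α`-free paths. -/
def F0 (α : Q.A) : Submodule k (PathAlg k Q) := Submodule.span k (AFSet k Q α)

/-- Existence of the projection onto a complement of `I ⊓ F0` inside `F0`,
with image spanned by a set `N` of `α`-free paths fixed by the projection. -/
theorem exists_proj (α : Q.A) (I : TwoSidedIdeal (PathAlg k Q)) :
    ∃ (pr : PathAlg k Q →ₗ[k] PathAlg k Q) (N : Set (PathAlg k Q)),
      N ⊆ AFSet k Q α ∧
      (∀ x ∈ N, pr x = x) ∧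
      (∀ x ∈ Isub k I ⊓ F0 k Q α, pr x = 0) ∧
      (∀ x ∈ F0 k Q α, pr x ∈ Submodule.span k N) ∧
      (∀ x ∈ F0 k Q α, x - pr x ∈ Isub k I ⊓ F0 k Q α) := by
  set U0 : Submodule k (PathAlg k Q) := Isub k I ⊓ F0 k Q α with hU0
  -- choose a basis of U0
  obtain ⟨BU, hBUsub, hBUspan, hBUind⟩ :=
    exists_linearIndependent k ((U0 : Set (PathAlg k Q)))
  rw [Submodule.span_eq] at hBUspan
  -- extend to the α-free paths
  have hBU_t : BU ⊆ AFSet k Q α ∪ BU := Set.subset_union_right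
  obtain ⟨bb, hbbsub, hBUbb, htspan, hbbind⟩ :=
    exists_linearIndepOn_id_extension hBUind hBU_t
  have hU0F : U0 ≤ F0 k Q α := inf_le_right
  have hspanbb : Submodule.span k bb = F0 k Q α := by
    apply le_antisymm
    · rw [Submodule.span_le]
      intro x hx
      rcases hbbsub hx with h | h
      · exact Submodule.subset_span h
      · exact hU0F (hBUspan ▸ Submodule.subset_span h)
    · rw [F0, Submodule.span_le]
      intro x hx
      exact htspan (Set.mem_union_left _ hx)
  -- basis of F0 indexed by bb
  have hrange : Set.range ((↑) : bb → PathAlg k Q) = bb := Subtype.range_coe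
  let B1 : Module.Basis bb k (Submodule.span k (Set.range ((↑) : bb → PathAlg k Q))) :=
    Module.Basis.span hbbind
  let e : Submodule.span k (Set.range ((↑) : bb → PathAlg k Q)) ≃ₗ[k] F0 k Q α :=
    LinearEquiv.ofEq _ _ (by rw [hrange, hspanbb])
  let BF : Module.Basis bb k (F0 k Q α) := B1.map e
  have hBF : ∀ i : bb, (BF i : PathAlg k Q) = (i : PathAlg k Q) := by
    intro i
    show (e (B1 i) : PathAlg k Q) = _
    rw [LinearEquiv.coe_ofEq_apply]; exact congrArg Subtype.val (Module.Basis.span_apply hbbind i)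
  -- the projection inside F0
  let ω : F0 k Q α →ₗ[k] PathAlg k Q :=
    BF.constr k fun i => if (i : PathAlg k Q) ∈ BU then 0 else (i : PathAlg k Q)
  set N : Set (PathAlg k Q) := bb \ BU with hN
  have hNAF : N ⊆ AFSet k Q α := by
    intro x hx
    rcases hbbsub hx.1 with h | h
    · exact h
    · exact absurd h hx.2
  have hmem_bb_F0 : ∀ x ∈ bb, x ∈ F0 k Q α := by
    intro x hx
    rw [← hspanbb]
    exact Submodule.subset_span hx
  have hBFel : ∀ (i : bb), BF i = ⟨(i : PathAlg k Q), hmem_bb_F0 _ i.2⟩ := by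
    intro i
    apply Subtype.ext
    rw [hBF]
  have homega : ∀ (x : PathAlg k Q) (hx : x ∈ bb),
      ω ⟨x, hmem_bb_F0 x hx⟩ = if x ∈ BU then 0 else x := by
    intro x hx
    have := BF.constr_basis k (fun i => if (i : PathAlg k Q) ∈ BU then 0 else (i : PathAlg k Q))
      ⟨x, hx⟩
    rw [hBFel ⟨x, hx⟩] at this
    exact this
  -- agreement of the global projection with ω
  let pr : PathAlg k Q →ₗ[k] PathAlg k Q :=
    (pathBasis k Q).constr k fun i =>
      if h : AFree α i.2.2 then
        ω ⟨pathElem k i.2.2, Submodule.subset_span ⟨i.1, i.2.1, i.2.2, h, rfl⟩⟩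
      else 0
  have hpr_base : ∀ (i : Idx Q) (h : AFree α i.2.2) (hm : peF k Q i ∈ F0 k Q α),
      pr (peF k Q i) = ω ⟨peF k Q i, hm⟩ := by
    intro i h hm
    have h1 : pr (pathBasis k Q i) =
        if h : AFree α i.2.2 then
          ω ⟨pathElem k i.2.2, Submodule.subset_span ⟨i.1, i.2.1, i.2.2, h, rfl⟩⟩
        else 0 :=
      (pathBasis k Q).constr_basis k _ i
    rw [pathBasis_apply] at h1
    rw [h1, dif_pos h]
    exact congrArg ω (Subtype.ext rfl)
  have hagree : ∀ (x : PathAlg k Q) (hx : x ∈ F0 k Q α), pr x = ω ⟨x, hx⟩ := by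
    intro x hx
    induction hx using Submodule.span_induction with
    | mem x hxm =>
      obtain ⟨u, v, p, hp, rfl⟩ := hxm
      exact hpr_base ⟨u, v, p⟩ hp (Submodule.subset_span ⟨u, v, p, hp, rfl⟩)
    | zero => rw [map_zero]; exact (map_zero ω).symm
    | add x y hx hy ihx ihy =>
      rw [map_add, ihx, ihy, ← map_add]
      rfl
    | smul c x hx ihx =>
      rw [map_smul, ihx, ← map_smul]
      rfl
  refine ⟨pr, N, hNAF, ?_, ?_, ?_, ?_⟩
  · -- pr fixes N
    intro x hx
    have hxbb : x ∈ bb := hx.1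
    rw [hagree x (hmem_bb_F0 x hxbb)]
    rw [homega x hxbb, if_neg hx.2]
  · -- pr kills U0
    intro x hx
    rw [hagree x (hU0F hx)]
    have : ∀ (y : PathAlg k Q) (hy : y ∈ U0) (hyF : y ∈ F0 k Q α), ω ⟨y, hyF⟩ = 0 := by
      intro y hy
      rw [← hBUspan] at hy
      induction hy using Submodule.span_induction with
      | mem z hz =>
        intro hyF
        have hzbb : z ∈ bb := hBUbb hz
        have : (⟨z, hyF⟩ : F0 k Q α) = ⟨z, hmem_bb_F0 z hzbb⟩ := rfl
        rw [this, homega z hzbb, if_pos hz]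
      | zero => intro h; exact map_zero ω
      | add a b ha hb iha ihb =>
        intro h
        have haF : a ∈ F0 k Q α := hU0F (hBUspan ▸ ha)
        have hbF : b ∈ F0 k Q α := hU0F (hBUspan ▸ hb)
        have : (⟨a + b, h⟩ : F0 k Q α) = ⟨a, haF⟩ + ⟨b, hbF⟩ := rfl
        rw [this, map_add, iha haF, ihb hbF, add_zero]
      | smul c a ha iha =>
        intro h
        have haF : a ∈ F0 k Q α := hU0F (hBUspan ▸ ha)
        have : (⟨c • a, h⟩ : F0 k Q α) = c • ⟨a, haF⟩ := rfl
        rw [this, map_smul, iha haF, smul_zero]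
    exact this x hx (hU0F hx)
  · -- image of pr inside span N
    intro x hx
    rw [hagree x hx]
    have : ∀ y : F0 k Q α, ω y ∈ Submodule.span k N := by
      intro y
      have hy : y ∈ (⊤ : Submodule k (F0 k Q α)) := trivial
      rw [← BF.span_eq] at hy
      induction hy using Submodule.span_induction with
      | mem z hz =>
        obtain ⟨i, rfl⟩ := hz
        rw [hBFel i, homega _ i.2]
        split_ifs with hi
        · exact Submodule.zero_mem _
        · exact Submodule.subset_span ⟨i.2, hi⟩
      | zero => rw [map_zero]; exact Submodule.zero_mem _
      | add a b ha hb iha ihb => rw [map_add]; exact Submodule.add_mem _ iha ihb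
      | smul c a ha iha => rw [map_smul]; exact Submodule.smul_mem _ _ iha
    exact this ⟨x, hx⟩
  · -- x - pr x ∈ U0
    intro x hx
    rw [hagree x hx]
    have : ∀ y : F0 k Q α, (y : PathAlg k Q) - ω y ∈ U0 := by
      intro y
      have hy : y ∈ (⊤ : Submodule k (F0 k Q α)) := trivial
      rw [← BF.span_eq] at hy
      induction hy using Submodule.span_induction with
      | mem z hz =>
        obtain ⟨i, rfl⟩ := hz
        rw [hBFel i, homega _ i.2]
        show (i : PathAlg k Q) - _ ∈ U0
        split_ifs with hi
        · rw [sub_zero]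
          exact hBUspan ▸ Submodule.subset_span hi
        · rw [sub_self]
          exact Submodule.zero_mem _
      | zero =>
        rw [map_zero]
        show (0 : PathAlg k Q) - 0 ∈ U0
        rw [sub_zero]
        exact Submodule.zero_mem _
      | add a b ha hb iha ihb =>
        rw [map_add]
        show ((a : PathAlg k Q) + b) - _ ∈ U0
        have : ((a : PathAlg k Q) + b) - (ω a + ω b) =
            ((a : PathAlg k Q) - ω a) + ((b : PathAlg k Q) - ω b) := by abel
        rw [this]
        exact Submodule.add_mem _ iha ihb
      | smul c a ha iha =>
        rw [map_smul]
        show (c • (a : PathAlg k Q)) - c • ω a ∈ U0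
        rw [← smul_sub]
        exact Submodule.smul_mem _ _ iha
    exact this ⟨x, hx⟩

end
end St6
namespace St6
variable {k : Type} [Field k] {Q : QuiverData}

noncomputable section
open scoped Classical

@[simp] lemma length_nil (u : Q.V) : (PP.nil (Q := Q) u).length = 0 := by rw [PP.length]
@[simp] lemma length_cons {u v : Q.V} (p : PP Q u v) (a : Q.A) (h : Q.src a = v) :
    (PP.cons p a h).length = p.length + 1 := by rw [PP.length]

lemma top_aFree (α : Q.A) : ∀ {u v : Q.V} (p : PP Q u v), AFree α (top α p).2 := by
  intro u v p
  induction p with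
  | nil => rw [top_nil]; exact aFree_nil α u
  | cons p a h ih =>
    by_cases ha : a = α
    · rw [top_cons_eq _ _ _ _ ha]
      exact aFree_nil α _
    · rw [top_cons_ne _ _ _ _ ha]
      show AFree α ((top α p).2.cons a h)
      rw [aFree_cons_iff]
      exact ⟨ih, ha⟩

variable (k) in
/-- The global reduction operator. -/
def Psi (α : Q.A) (pr : PathAlg k Q →ₗ[k] PathAlg k Q) :
    PathAlg k Q →ₗ[k] PathAlg k Q :=
  (pathBasis k Q).constr k fun i => psi k α pr i.2.2

lemma Psi_pathElem (α : Q.A) (pr : PathAlg k Q →ₗ[k] PathAlg k Q)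
    {u v : Q.V} (p : PP Q u v) :
    Psi k α pr (pathElem k p) = psi k α pr p := by
  have h := (pathBasis k Q).constr_basis k (fun i => psi k α pr i.2.2) ⟨u, v, p⟩
  erw [pathBasis_apply] at h
  exact h

/-- Multiplying an element of `F0` by `α`-free paths on both sides stays in `F0`. -/
lemma F0_mul_mem (α : Q.A) {v₀ w : Q.V} (a : PP Q v₀ w) (ha : AFree α a)
    {z u₀ : Q.V} (c : PP Q z u₀) (hc : AFree α c) :
    ∀ x ∈ F0 k Q α, pathElem k a * x * pathElem k c ∈ F0 k Q α := by
  intro x hx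
  induction hx using Submodule.span_induction with
  | mem q hq =>
    obtain ⟨u', v', p, hp, rfl⟩ := hq
    by_cases h1 : v' = v₀
    · subst h1
      rw [← pathElem_comp]
      by_cases h2 : u' = u₀
      · subst h2
        rw [← pathElem_comp]
        exact Submodule.subset_span
          ⟨z, w, c.comp (p.comp a), aFree_comp α c (p.comp a) hc (aFree_comp α p a hp ha), rfl⟩
      · rw [pathElem_mul_pathElem_of_ne (p.comp a) c h2]
        exact Submodule.zero_mem _
    · rw [pathElem_mul_pathElem_of_ne a p (fun hh => h1 hh.symm), zero_mul]
      exact Submodule.zero_mem _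
  | zero =>
    rw [mul_zero, zero_mul]
    exact Submodule.zero_mem _
  | add x y hx hy ihx ihy =>
    rw [mul_add, add_mul]
    exact Submodule.add_mem _ ihx ihy
  | smul c' x hx ihx =>
    rw [mul_smul_comm, smul_mul_assoc]
    exact Submodule.smul_mem _ _ ihx

section WithProj
variable (α : Q.A) (pr : PathAlg k Q →ₗ[k] PathAlg k Q)

/-- The `Ψ`-formula when the left path is `α`-free. -/
lemma formula1 {v₀ w : Q.V} (a : PP Q v₀ w) (ha : AFree α a)
    {z u₀ : Q.V} (b : PP Q z u₀) :
    ∀ x ∈ F0 k Q α,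
      Psi k α pr (pathElem k a * x * pathElem k b) =
        pr (pathElem k a * x * pathElem k (top α b).2) * low k α pr b := by
  have hbase : ∀ y ∈ AFSet k Q α,
      Psi k α pr (pathElem k a * y * pathElem k b) =
        pr (pathElem k a * y * pathElem k (top α b).2) * low k α pr b := by
    rintro y ⟨u', v', p, hp, rfl⟩
    by_cases h1 : v' = v₀
    · subst h1
      have e0 : pathElem k a * pathElem k p = pathElem k (p.comp a) :=
        (pathElem_comp p a).symm
      by_cases h2 : u' = u₀
      · subst h2
        have e1 : pathElem k (b.comp (p.comp a)) =
            pathElem k a * pathElem k p * pathElem k b := by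
          rw [pathElem_comp b (p.comp a), pathElem_comp p a]
        have e2 : pathElem k ((top α b).2.comp (p.comp a)) =
            pathElem k a * pathElem k p * pathElem k (top α b).2 := by
          rw [pathElem_comp (top α b).2 (p.comp a), pathElem_comp p a]
        rw [← e1, ← e2, Psi_pathElem]
        have hct := comp_aFree_top (k := k) α (p.comp a) (aFree_comp α p a hp ha) b
        show pr (pathElem k (top α (b.comp (p.comp a))).2) *
            low k α pr (b.comp (p.comp a)) = _
        rw [hct.1, hct.2 pr, pathElem_comp (top α b).2 (p.comp a)]
      · rw [e0, pathElem_mul_pathElem_of_ne (p.comp a) b h2,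
          pathElem_mul_pathElem_of_ne (p.comp a) (top α b).2 h2,
          map_zero, map_zero, zero_mul]
    · rw [pathElem_mul_pathElem_of_ne a p (fun hh => h1 hh.symm), zero_mul, zero_mul,
        map_zero, map_zero, zero_mul]
  intro x hx
  let f : PathAlg k Q →ₗ[k] PathAlg k Q :=
    (Psi k α pr) ∘ₗ (LinearMap.mulRight k (pathElem k b)) ∘ₗ
      (LinearMap.mulLeft k (pathElem k a))
  let g : PathAlg k Q →ₗ[k] PathAlg k Q :=
    (LinearMap.mulRight k (low k α pr b)) ∘ₗ pr ∘ₗ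
      (LinearMap.mulRight k (pathElem k (top α b).2)) ∘ₗ
      (LinearMap.mulLeft k (pathElem k a))
  have hfg : Set.EqOn ⇑f ⇑g (AFSet k Q α) := by
    intro y hy
    simp only [f, g, LinearMap.coe_comp, Function.comp_apply, LinearMap.mulLeft_apply,
      LinearMap.mulRight_apply]
    exact hbase y hy
  have := LinearMap.eqOn_span hfg hx
  simpa only [f, g, LinearMap.coe_comp, Function.comp_apply, LinearMap.mulLeft_apply,
    LinearMap.mulRight_apply] using this

/-- The `Ψ`-formula when the left path involves `α`. -/
lemma formula2 {v₀ w : Q.V} (a : PP Q v₀ w) (ha : ¬ AFree α a) :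
    ∃ r : PP Q v₀ (Q.src α), r.length < a.length ∧
      ∀ {z u₀ : Q.V} (b : PP Q z u₀), ∀ x ∈ F0 k Q α,
        Psi k α pr (pathElem k a * x * pathElem k b) =
          pr (pathElem k (top α a).2) *
            (arr k Q α * Psi k α pr (pathElem k r * x * pathElem k b)) := by
  obtain ⟨r, helem, hlow, hcomp, hlen⟩ := notAFree_decomp (k := k) α a ha
  refine ⟨r, hlen, ?_⟩
  intro z u₀ b
  have hbase : ∀ y ∈ AFSet k Q α,
      Psi k α pr (pathElem k a * y * pathElem k b) =
        pr (pathElem k (top α a).2) *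
          (arr k Q α * Psi k α pr (pathElem k r * y * pathElem k b)) := by
    rintro y ⟨u', v', p, hp, rfl⟩
    by_cases h1 : v' = v₀
    · subst h1
      have e0a : pathElem k a * pathElem k p = pathElem k (p.comp a) :=
        (pathElem_comp p a).symm
      have e0r : pathElem k r * pathElem k p = pathElem k (p.comp r) :=
        (pathElem_comp p r).symm
      by_cases h2 : u' = u₀
      · subst h2
        have e1 : pathElem k (b.comp (p.comp a)) =
            pathElem k a * pathElem k p * pathElem k b := by
          rw [pathElem_comp b (p.comp a), pathElem_comp p a]
        have e3 : pathElem k (b.comp (p.comp r)) =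
            pathElem k r * pathElem k p * pathElem k b := by
          rw [pathElem_comp b (p.comp r), pathElem_comp p r]
        rw [← e1, ← e3, ← PP.comp_assoc b p a, ← PP.comp_assoc b p r,
          Psi_pathElem, Psi_pathElem]
        show pr (pathElem k (top α ((b.comp p).comp a)).2) *
            low k α pr ((b.comp p).comp a) =
          pr (pathElem k (top α a).2) * (arr k Q α * psi k α pr ((b.comp p).comp r))
        rw [(hcomp (b.comp p)).1, (hcomp (b.comp p)).2 pr]
      · rw [e0a, e0r, pathElem_mul_pathElem_of_ne (p.comp a) b h2,
          pathElem_mul_pathElem_of_ne (p.comp r) b h2]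
        simp
    · rw [pathElem_mul_pathElem_of_ne a p (fun hh => h1 hh.symm),
        pathElem_mul_pathElem_of_ne r p (fun hh => h1 hh.symm)]
      simp
  intro x hx
  let f : PathAlg k Q →ₗ[k] PathAlg k Q :=
    (Psi k α pr) ∘ₗ (LinearMap.mulRight k (pathElem k b)) ∘ₗ
      (LinearMap.mulLeft k (pathElem k a))
  let g : PathAlg k Q →ₗ[k] PathAlg k Q :=
    (LinearMap.mulLeft k (pr (pathElem k (top α a).2))) ∘ₗ
      (LinearMap.mulLeft k (arr k Q α)) ∘ₗ (Psi k α pr) ∘ₗ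
      (LinearMap.mulRight k (pathElem k b)) ∘ₗ (LinearMap.mulLeft k (pathElem k r))
  have hfg : Set.EqOn ⇑f ⇑g (AFSet k Q α) := by
    intro y hy
    simp only [f, g, LinearMap.coe_comp, Function.comp_apply, LinearMap.mulLeft_apply,
      LinearMap.mulRight_apply]
    exact hbase y hy
  have := LinearMap.eqOn_span hfg hx
  simpa only [f, g, LinearMap.coe_comp, Function.comp_apply, LinearMap.mulLeft_apply,
    LinearMap.mulRight_apply] using this

variable (I : TwoSidedIdeal (PathAlg k Q))

/-- `Ψ` kills everything of the form `path * x * path` with `x ∈ I ⊓ F0`. -/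
lemma kill_of_aFree
    (hkill : ∀ x ∈ Isub k I ⊓ F0 k Q α, pr x = 0)
    {v₀ w : Q.V} (a : PP Q v₀ w) (ha : AFree α a)
    {z u₀ : Q.V} (b : PP Q z u₀)
    {x : PathAlg k Q} (hx : x ∈ Isub k I ⊓ F0 k Q α) :
    Psi k α pr (pathElem k a * x * pathElem k b) = 0 := by
  rw [formula1 α pr a ha b x hx.2]
  have hmid : pathElem k a * x * pathElem k (top α b).2 ∈ Isub k I ⊓ F0 k Q α := by
    constructor
    · show _ ∈ Isub k I
      rw [mem_Isub]
      exact I.mul_mem_right _ _ (I.mul_mem_left _ _ hx.1)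
    · exact F0_mul_mem α a ha (top α b).2 (top_aFree α b) x hx.2
  rw [hkill _ hmid, zero_mul]

lemma kill_paths
    (hkill : ∀ x ∈ Isub k I ⊓ F0 k Q α, pr x = 0) :
    ∀ (n : ℕ) {v₀ w : Q.V} (a : PP Q v₀ w), a.length ≤ n →
      ∀ {z u₀ : Q.V} (b : PP Q z u₀), ∀ {x : PathAlg k Q},
        x ∈ Isub k I ⊓ F0 k Q α →
        Psi k α pr (pathElem k a * x * pathElem k b) = 0 := by
  intro n
  induction n with
  | zero =>
    intro v₀ w a hlen z u₀ b x hx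
    by_cases ha : AFree α a
    · exact kill_of_aFree α pr I hkill a ha b hx
    · obtain ⟨r, hrlen, -⟩ := formula2 α pr a ha
      exact absurd (lt_of_lt_of_le hrlen hlen) (Nat.not_lt_zero _)
  | succ n ih =>
    intro v₀ w a hlen z u₀ b x hx
    by_cases ha : AFree α a
    · exact kill_of_aFree α pr I hkill a ha b hx
    · obtain ⟨r, hrlen, hform⟩ := formula2 α pr a ha
      rw [hform b x hx.2]
      rw [ih r (Nat.lt_succ_iff.mp (lt_of_lt_of_le hrlen hlen)) b hx]
      rw [mul_zero, mul_zero]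

/-- `Ψ` kills the ideal `I`, provided `I` is generated by elements of `I ⊓ F0`. -/
lemma kill_ideal
    (hkill : ∀ x ∈ Isub k I ⊓ F0 k Q α, pr x = 0)
    (S : Set (PathAlg k Q)) (hgen : I = TwoSidedIdeal.span S)
    (hSsub : ∀ s ∈ S, s ∈ Isub k I ⊓ F0 k Q α) :
    ∀ y ∈ I, Psi k α pr y = 0 := by
  have hgenmem : ∀ s ∈ S, ∀ A B : PathAlg k Q, Psi k α pr (A * s * B) = 0 := by
    intro s hs A B
    have hA : A ∈ Submodule.span k (Set.range (peF k Q)) := by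
      rw [peF_span]; trivial
    induction hA using Submodule.span_induction with
    | mem A hA =>
      obtain ⟨ia, rfl⟩ := hA
      have hB : B ∈ Submodule.span k (Set.range (peF k Q)) := by
        rw [peF_span]; trivial
      induction hB using Submodule.span_induction with
      | mem B hB =>
        obtain ⟨ib, rfl⟩ := hB
        exact kill_paths α pr I hkill ia.2.2.length ia.2.2 le_rfl ib.2.2 (hSsub s hs)
      | zero => rw [mul_zero, map_zero]
      | add x y hx hy ihx ihy => rw [mul_add, map_add, ihx, ihy, add_zero]
      | smul c x hx ihx => rw [mul_smul_comm, map_smul, ihx, smul_zero]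
    | zero => rw [zero_mul, zero_mul, map_zero]
    | add x y hx hy ihx ihy => rw [add_mul, add_mul, map_add, ihx, ihy, add_zero]
    | smul c x hx ihx => rw [smul_mul_assoc, smul_mul_assoc, map_smul, ihx, smul_zero]
  -- absorbing set
  let J : TwoSidedIdeal (PathAlg k Q) :=
    TwoSidedIdeal.mk' {y | ∀ A B : PathAlg k Q, Psi k α pr (A * y * B) = 0}
      (fun A B => by rw [mul_zero, zero_mul, map_zero])
      (fun {y₁ y₂} h1 h2 A B => by
        rw [mul_add, add_mul, map_add, h1 A B, h2 A B, add_zero])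
      (fun {y} h A B => by
        rw [mul_neg, neg_mul, map_neg, h A B, neg_zero])
      (fun {y₁ y₂} h2 A B => by
        rw [show A * (y₁ * y₂) * B = (A * y₁) * y₂ * B by rw [← mul_assoc A y₁ y₂]]
        exact h2 (A * y₁) B)
      (fun {y₁ y₂} h1 A B => by
        rw [show A * (y₁ * y₂) * B = A * y₁ * (y₂ * B) by
          rw [← mul_assoc A y₁ y₂, mul_assoc (A * y₁) y₂ B]]
        exact h1 A (y₂ * B))
  have hSJ : S ⊆ (J : Set (PathAlg k Q)) := by
    intro s hs
    show s ∈ J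
    rw [TwoSidedIdeal.mem_mk']
    exact hgenmem s hs
  intro y hy
  have hyJ : y ∈ J := by
    rw [hgen] at hy
    exact TwoSidedIdeal.mem_span_iff.mp hy J hSJ
  rw [TwoSidedIdeal.mem_mk'] at hyJ
  have := hyJ 1 1
  rwa [one_mul, mul_one] at this

end WithProj

variable (k) in
/-- Paths all of whose maximal `α`-free segments lie in `N`. -/
inductive NP (α : Q.A) (N : Set (PathAlg k Q)) : ∀ {u v : Q.V}, PP Q u v → Prop
  | base {u v : Q.V} (q : PP Q u v) (hq : AFree α q) (hmem : pathElem k q ∈ N) : NP α N q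
  | step {z v : Q.V} (r : PP Q z (Q.src α)) (q : PP Q (Q.tgt α) v) (hr : NP α N r)
      (hq : AFree α q) (hmem : pathElem k q ∈ N) :
      NP α N ((r.cons α rfl).comp q)

variable (k) in
/-- The set of `N`-paths. -/
def Pset (α : Q.A) (N : Set (PathAlg k Q)) : Set (PathAlg k Q) :=
  {x | ∃ (u v : Q.V) (p : PP Q u v), NP k α N p ∧ x = pathElem k p}

section WithN
variable (α : Q.A) (N : Set (PathAlg k Q)) (pr : PathAlg k Q →ₗ[k] PathAlg k Q)

lemma psi_fix (hfix : ∀ x ∈ N, pr x = x) :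
    ∀ {u v : Q.V} {p : PP Q u v}, NP k α N p → psi k α pr p = pathElem k p := by
  intro u v p hp
  induction hp with
  | base q hq hmem =>
    obtain ⟨h1, h2⟩ := top_of_aFree (k := k) α q hq
    rw [psi, h1, h2 pr, hfix _ hmem, pathElem_mul_vtx, if_pos rfl]
  | step r q hr hq hmem ih =>
    have hct := comp_aFree_top (k := k) α q hq (r.cons α rfl)
    rw [psi, hct.1, hct.2 pr]
    rw [top_cons_eq α r α rfl rfl]
    show pr (pathElem k q * pathElem k (PP.nil (Q.tgt α))) *
      low k α pr (r.cons α rfl) = _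
    rw [low_cons_eq α pr r α rfl rfl, ih, pathElem_nil, pathElem_mul_vtx, if_pos rfl,
      hfix _ hmem, pathElem_comp, pathElem_cons]

lemma Psi_fix_spanP (hfix : ∀ x ∈ N, pr x = x) :
    ∀ x ∈ Submodule.span k (Pset k α N), Psi k α pr x = x := by
  intro x hx
  induction hx using Submodule.span_induction with
  | mem y hy =>
    obtain ⟨u, v, p, hp, rfl⟩ := hy
    rw [Psi_pathElem, psi_fix α N pr hfix hp]
  | zero => rw [map_zero]
  | add x y hx hy ihx ihy => rw [map_add, ihx, ihy]
  | smul c x hx ihx => rw [map_smul, ihx]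

lemma NP_comp {z : Q.V} {r : PP Q z (Q.src α)} (hr : NP k α N r) :
    ∀ {w : Q.V} {m : PP Q (Q.tgt α) w}, NP k α N m →
      NP k α N ((r.cons α rfl).comp m) := by
  intro w m hm
  induction hm with
  | base q hq hmem => exact NP.step r q hr hq hmem
  | step r' q hr' hq hmem ih =>
    have : (r.cons α rfl).comp ((r'.cons α rfl).comp q) =
        ((((r.cons α rfl).comp r')).cons α rfl).comp q := by
      rw [← PP.comp_assoc, PP.comp_cons]
    rw [this]
    exact NP.step _ q ih hq hmem

end WithN
end
end St6
namespace St6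
variable {k : Type} [Field k] {Q : QuiverData}

noncomputable section
open scoped Classical

lemma arr_mul_pathElem (a : Q.A) {u v : Q.V} (m : PP Q u v) :
    arr k Q a * pathElem k m =
      if h : Q.src a = v then pathElem k (m.cons a h) else 0 := by
  by_cases h : Q.src a = v
  · rw [dif_pos h, pathElem_cons]
  · rw [dif_neg h]
    have h0 : vtx k Q v * pathElem k m = pathElem k m := by
      rw [vtx_mul_pathElem, if_pos rfl]
    rw [← h0, ← mul_assoc, arr_mul_vtx, if_neg h, zero_mul]

section SpanSec
variable (α : Q.A) (N : Set (PathAlg k Q))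

lemma N_subset_Pset (hNAF : N ⊆ AFSet k Q α) : N ⊆ Pset k α N := by
  intro x hx
  obtain ⟨u, v, q, hq, rfl⟩ := hNAF hx
  exact ⟨u, v, q, NP.base q hq hx, rfl⟩

lemma N_mul_P (hNAF : N ⊆ AFSet k Q α) :
    ∀ t ∈ Submodule.span k N, ∀ y ∈ Submodule.span k (Pset k α N),
      t * (arr k Q α * y) ∈ Submodule.span k (Pset k α N) := by
  intro t ht
  induction ht using Submodule.span_induction with
  | mem t htm =>
    intro y hy
    induction hy using Submodule.span_induction with
    | mem y hym =>
      obtain ⟨uq, vq, q, hqf, heq⟩ := hNAF htm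
      obtain ⟨um, wm, m, hm, rfl⟩ := hym
      subst heq
      rw [arr_mul_pathElem]
      by_cases h1 : Q.src α = wm
      · rw [dif_pos h1]
        subst h1
        by_cases h2 : uq = Q.tgt α
        · subst h2
          rw [← pathElem_comp]
          exact Submodule.subset_span
            ⟨um, vq, (m.cons α rfl).comp q, NP_comp α N hm (NP.base q hqf htm), rfl⟩
        · rw [pathElem_mul_pathElem_of_ne q (m.cons α rfl) h2]
          exact Submodule.zero_mem _
      · rw [dif_neg h1, mul_zero]
        exact Submodule.zero_mem _
    | zero =>
      rw [mul_zero, mul_zero]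
      exact Submodule.zero_mem _
    | add y₁ y₂ h₁ h₂ ih₁ ih₂ =>
      rw [mul_add, mul_add]
      exact Submodule.add_mem _ ih₁ ih₂
    | smul c y₁ h₁ ih₁ =>
      rw [mul_smul_comm, mul_smul_comm]
      exact Submodule.smul_mem _ _ ih₁
  | zero =>
    intro y hy
    rw [zero_mul]
    exact Submodule.zero_mem _
  | add t₁ t₂ h₁ h₂ ih₁ ih₂ =>
    intro y hy
    rw [add_mul]
    exact Submodule.add_mem _ (ih₁ y hy) (ih₂ y hy)
  | smul c t₁ h₁ ih₁ =>
    intro y hy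
    rw [smul_mul_assoc]
    exact Submodule.smul_mem _ _ (ih₁ y hy)

variable (I : TwoSidedIdeal (PathAlg k Q)) (pr : PathAlg k Q →ₗ[k] PathAlg k Q)

lemma span_paths
    (hNAF : N ⊆ AFSet k Q α)
    (hrange : ∀ x ∈ F0 k Q α, pr x ∈ Submodule.span k N)
    (hdiff : ∀ x ∈ F0 k Q α, x - pr x ∈ Isub k I ⊓ F0 k Q α) :
    ∀ (n : ℕ) {u v : Q.V} (p : PP Q u v), p.length ≤ n →
      pathElem k p ∈ Submodule.span k (Pset k α N) ⊔ Isub k I := by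
  intro n
  induction n with
  | zero =>
    intro u v p hlen
    -- a path of length 0 is α-free
    by_cases hfree : AFree α p
    · have hF : pathElem k p ∈ F0 k Q α := Submodule.subset_span ⟨u, v, p, hfree, rfl⟩
      have h1 : pr (pathElem k p) ∈ Submodule.span k (Pset k α N) :=
        Submodule.span_mono (N_subset_Pset α N hNAF) (hrange _ hF)
      have h2 : pathElem k p - pr (pathElem k p) ∈ Isub k I := (hdiff _ hF).1
      have h3 := Submodule.add_mem _ (Submodule.mem_sup_left h1) (Submodule.mem_sup_right h2)
      have h4 : pr (pathElem k p) + (pathElem k p - pr (pathElem k p)) = pathElem k p := by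
        abel
      rwa [h4] at h3
    · obtain ⟨r, -, -, -, hrlen⟩ := notAFree_decomp (k := k) α p hfree
      exact absurd (lt_of_lt_of_le hrlen hlen) (Nat.not_lt_zero _)
  | succ n ih =>
    intro u v p hlen
    by_cases hfree : AFree α p
    · have hF : pathElem k p ∈ F0 k Q α := Submodule.subset_span ⟨u, v, p, hfree, rfl⟩
      have h1 : pr (pathElem k p) ∈ Submodule.span k (Pset k α N) :=
        Submodule.span_mono (N_subset_Pset α N hNAF) (hrange _ hF)
      have h2 : pathElem k p - pr (pathElem k p) ∈ Isub k I := (hdiff _ hF).1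
      have h3 := Submodule.add_mem _ (Submodule.mem_sup_left h1) (Submodule.mem_sup_right h2)
      have h4 : pr (pathElem k p) + (pathElem k p - pr (pathElem k p)) = pathElem k p := by
        abel
      rwa [h4] at h3
    · obtain ⟨r, helem, -, -, hrlen⟩ := notAFree_decomp (k := k) α p hfree
      set T := pathElem k (top α p).2 with hT
      have hTF : T ∈ F0 k Q α :=
        Submodule.subset_span ⟨(top α p).1, v, (top α p).2, top_aFree α p, rfl⟩
      have hR := ih r (Nat.lt_succ_iff.mp (lt_of_lt_of_le hrlen hlen))
      obtain ⟨y, hy, zz, hzz, hyz⟩ := Submodule.mem_sup.mp hR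
      have hsplit : pathElem k p =
          pr T * (arr k Q α * y) +
            (pr T * (arr k Q α * zz) + (T - pr T) * (arr k Q α * (y + zz))) := by
        rw [helem, ← hyz]
        noncomm_ring
      rw [hsplit]
      refine Submodule.add_mem _ (Submodule.mem_sup_left ?_) (Submodule.mem_sup_right ?_)
      · exact N_mul_P α N hNAF _ (hrange _ hTF) y hy
      · refine Submodule.add_mem _ ?_ ?_
        · show pr T * (arr k Q α * zz) ∈ Isub k I
          rw [mem_Isub]
          exact I.mul_mem_left _ _ (I.mul_mem_left _ _ hzz)
        · show (T - pr T) * (arr k Q α * (y + zz)) ∈ Isub k I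
          rw [mem_Isub]
          exact I.mul_mem_right _ _ ((hdiff _ hTF).1)

lemma span_top
    (hNAF : N ⊆ AFSet k Q α)
    (hrange : ∀ x ∈ F0 k Q α, pr x ∈ Submodule.span k N)
    (hdiff : ∀ x ∈ F0 k Q α, x - pr x ∈ Isub k I ⊓ F0 k Q α) :
    Submodule.span k (Pset k α N) ⊔ Isub k I = ⊤ := by
  rw [eq_top_iff, ← peF_span, Submodule.span_le]
  rintro x ⟨i, rfl⟩
  exact span_paths α N I pr hNAF hrange hdiff i.2.2.length i.2.2 le_rfl

end SpanSec

lemma isPathFT_pathElem {u v : Q.V} (p : PP Q u v) :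
    IsPathFT k Q (pathElem k p) u v := by
  induction p with
  | nil => rw [pathElem_nil]; exact IsPathFT.vert _
  | cons p a h ih => rw [pathElem_cons]; exact IsPathFT.cons a ih h

lemma isPathFT_exists {x : PathAlg k Q} {u v : Q.V} (hx : IsPathFT k Q x u v) :
    ∃ p : PP Q u v, x = pathElem k p := by
  induction hx with
  | vert w => exact ⟨PP.nil w, (pathElem_nil w).symm⟩
  | cons a hp hv ih =>
    obtain ⟨p, rfl⟩ := ih
    exact ⟨PP.cons p a hv, (pathElem_cons p a hv).symm⟩

lemma avoid_exists {α : Q.A} {x : PathAlg k Q} {u v : Q.V}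
    (hx : IsPathFTAvoid k Q (Sum.inr α) x u v) :
    ∃ p : PP Q u v, AFree α p ∧ x = pathElem k p := by
  induction hx with
  | vert w hv => exact ⟨PP.nil w, aFree_nil α w, (pathElem_nil w).symm⟩
  | cons a hp hv ha ht ih =>
    obtain ⟨p, hfree, rfl⟩ := ih
    refine ⟨PP.cons p a hv, ?_, (pathElem_cons p a hv).symm⟩
    rw [aFree_cons_iff]
    exact ⟨hfree, fun haα => ha (by rw [haα])⟩

lemma notInvolving_mem_F0 {α : Q.A} {x : PathAlg k Q}
    (hx : NotInvolving k Q (Sum.inr α) x) : x ∈ F0 k Q α := by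
  refine Submodule.span_mono ?_ hx
  rintro y ⟨u, v, hy⟩
  obtain ⟨p, hp, rfl⟩ := avoid_exists hy
  exact ⟨u, v, p, hp, rfl⟩

end
end St6

open St6

/-- If `I` is an admissible ideal of `kQ` generated by uniform
relations not involving a fixed arrow `α`, then `Λ = kQ/I` has a basis of residue
classes of paths which is closed under the operation `(p₁, p₂) ↦ p₁ α p₂`
whenever the composite is defined. -/
theorem statement_6 (k : Type) [Field k] (Q : QuiverData) (α : Q.A)
    (I : TwoSidedIdeal (PathAlg k Q)) (hadm : IsAdmissible k Q I)
    (S : Set (PathAlg k Q)) (hgen : I = TwoSidedIdeal.span S)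
    (hS : ∀ r ∈ S, IsUniform k Q r ∧ NotInvolving k Q (Sum.inr α) r) :
    ∃ P : Set (PathAlg k Q),
      (∀ p ∈ P, IsPath k Q p) ∧
      (∃ b : Module.Basis P k (QuotAlg k Q I), ∀ p : P, b p = quotMap k Q I p) ∧
      (∀ p₁ ∈ P, ∀ p₂ ∈ P,
        (∃ u, IsPathFT k Q p₂ u (Q.src α)) →
        (∃ w, IsPathFT k Q p₁ (Q.tgt α) w) →
        p₁ * arr k Q α * p₂ ∈ P) := by
  classical
  obtain ⟨pr, N, hNAF, hfix, hkill, hrange, hdiff⟩ := exists_proj (k := k) (Q := Q) α I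
  have hSsub : ∀ s ∈ S, s ∈ Isub k I ⊓ F0 k Q α := by
    intro s hs
    rw [Submodule.mem_inf]
    constructor
    · show s ∈ I
      rw [hgen]
      exact TwoSidedIdeal.subset_span hs
    · exact notInvolving_mem_F0 (hS s hs).2
  have hkillI : ∀ y ∈ I, Psi k α pr y = 0 :=
    kill_ideal α pr I hkill S hgen hSsub
  refine ⟨Pset k α N, ?_, ?_, ?_⟩
  · rintro p ⟨u, v, q, hq, rfl⟩
    exact ⟨u, v, isPathFT_pathElem q⟩
  · -- the basis
    have hex : ∀ p : Pset k α N, ∃ i : Idx Q, peF k Q i = (p : PathAlg k Q) := by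
      rintro ⟨x, u, v, q, hq, rfl⟩
      exact ⟨⟨u, v, q⟩, rfl⟩
    choose emb hemb using hex
    have hembinj : Function.Injective emb := by
      intro p p' h
      apply Subtype.ext
      rw [← hemb p, ← hemb p', h]
    have hcoe : LinearIndependent k (fun p : Pset k α N => (p : PathAlg k Q)) := by
      have h := (peF_indep (k := k) (Q := Q)).comp emb hembinj
      have heq : (peF k Q) ∘ emb = fun p : Pset k α N => (p : PathAlg k Q) :=
        funext hemb
      rwa [heq] at h
    have hfamind : LinearIndependent k
        (fun p : Pset k α N => quotMap k Q I (p : PathAlg k Q)) := by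
      rw [linearIndependent_iff]
      intro l hl
      set y := Finsupp.linearCombination k
        (fun p : Pset k α N => (p : PathAlg k Q)) l with hy
      have h1 : quotMap k Q I y = 0 := by
        rw [hy]
        have happ := Finsupp.apply_linearCombination k (quotMap k Q I).toLinearMap
          (fun p : Pset k α N => (p : PathAlg k Q)) l
        have : (quotMap k Q I).toLinearMap
            (Finsupp.linearCombination k (fun p : Pset k α N => (p : PathAlg k Q)) l) =
            Finsupp.linearCombination k
              (fun p : Pset k α N => quotMap k Q I (p : PathAlg k Q)) l := happ
        rw [AlgHom.toLinearMap_apply] at this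
        rw [this]
        exact hl
      have h2 : y ∈ I := mem_of_quotMap_eq_zero h1
      have h3 : y ∈ Submodule.span k (Pset k α N) := by
        have hmem : y ∈ LinearMap.range (Finsupp.linearCombination k
            (fun p : Pset k α N => (p : PathAlg k Q))) := ⟨l, hy.symm⟩
        rw [← Finsupp.span_eq_range_linearCombination] at hmem
        exact hmem
      have h4 : y = 0 := by
        have hfx := Psi_fix_spanP α N pr hfix y h3
        rw [hkillI y h2] at hfx
        exact hfx.symm
      exact linearIndependent_iff.mp hcoe l (by rw [← hy]; exact h4)
    have hspan : ⊤ ≤ Submodule.span k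
        (Set.range (fun p : Pset k α N => quotMap k Q I (p : PathAlg k Q))) := by
      intro zq _
      obtain ⟨y, rfl⟩ := RingQuot.mkAlgHom_surjective k
        (fun a b : PathAlg k Q => b = 0 ∧ a ∈ I) zq
      have htop := span_top α N I pr hNAF hrange hdiff
      have hymem : y ∈ Submodule.span k (Pset k α N) ⊔ Isub k I := by
        rw [htop]; trivial
      obtain ⟨y₁, h₁, y₂, h₂, rfl⟩ := Submodule.mem_sup.mp hymem
      show quotMap k Q I (y₁ + y₂) ∈ _
      rw [map_add, quotMap_eq_zero_of_mem h₂, add_zero]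
      have hmap : quotMap k Q I y₁ ∈ Submodule.map (quotMap k Q I).toLinearMap
          (Submodule.span k (Pset k α N)) := ⟨y₁, h₁, rfl⟩
      rw [Submodule.map_span] at hmap
      refine Submodule.span_le.mpr ?_ hmap
      rintro _ ⟨x, hx, rfl⟩
      exact Submodule.subset_span ⟨⟨x, hx⟩, rfl⟩
    refine ⟨Module.Basis.mk hfamind hspan, fun p => Module.Basis.mk_apply _ _ _⟩
  · rintro p₁ ⟨u₁, v₁, m₁, hm₁, rfl⟩ p₂ ⟨u₂, v₂, m₂, hm₂, rfl⟩ ⟨u, h2⟩ ⟨w, h1⟩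
    obtain ⟨q₂, hq₂⟩ := isPathFT_exists h2
    obtain ⟨q₁, hq₁⟩ := isPathFT_exists h1
    have e₂ : (⟨u₂, v₂, m₂⟩ : Idx Q) = ⟨u, Q.src α, q₂⟩ :=
      peF_injective (k := k) (Q := Q) hq₂
    have e₁ : (⟨u₁, v₁, m₁⟩ : Idx Q) = ⟨Q.tgt α, w, q₁⟩ :=
      peF_injective (k := k) (Q := Q) hq₁
    have hv₂ : v₂ = Q.src α := congrArg (fun i : Idx Q => i.2.1) e₂
    have hu₁ : u₁ = Q.tgt α := congrArg (fun i : Idx Q => i.1) e₁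
    subst hv₂
    subst hu₁
    refine ⟨u₂, v₁, (m₂.cons α rfl).comp m₁, NP_comp α N hm₂ hm₁, ?_⟩
    rw [pathElem_comp, pathElem_cons, mul_assoc]
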